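/- arXiv:2304.03264 — 7 statements merged into one kernel-verified Lean document; each statement's English description precedes it below -/
import Mathlib

section
/- Let 𝓛 ∈ ℝ^{N×N} be a symmetric positive semidefinite matrix (a graph Laplacian), E a diagonal 0/1 matrix, r ∈ ℝ^{Nd}, and ψ ∈ S(m_ψ, L_ψ) with 0 < m_ψ ≤ L_ψ. Define f(y) = ½ (y−r)ᵀ(𝓛 ⊗ I_d)(y−r) + Σ_{i : E_{ii}=1} ψ(y_i). Then, for constants 0 < m ≤ L, the following are equivalent: (1) f ∈ S(m,L) for every ψ ∈ S(m_ψ, L_ψ); (2) m·I ⪯ 𝓛 + m_ψ·E and 𝓛 + L_ψ·E ⪯ L·I. -/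
open Matrix
open scoped Kronecker

def memS {E : Type*} [NormedAddCommGroup E] [InnerProductSpace ℝ E] [CompleteSpace E]
    (m L : ℝ) (f : E → ℝ) : Prop :=
  ContDiff ℝ 1 f ∧
    ∀ y₁ y₂ : E,
      m * ‖y₁ - y₂‖ ^ 2 ≤ (inner ℝ (gradient f y₁ - gradient f y₂) (y₁ - y₂) : ℝ) ∧
      (inner ℝ (gradient f y₁ - gradient f y₂) (y₁ - y₂) : ℝ) ≤ L * ‖y₁ - y₂‖ ^ 2

/-- The source-seeking objective `f(y) = ½(y−r)ᵀ(𝓛⊗I_d)(y−r) + Σ_{i∈𝓥_l} ψ(y_i)`. -/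
noncomputable def bigf {N d : ℕ} (𝓛 : Matrix (Fin N) (Fin N) ℝ)
    (r : EuclideanSpace ℝ (Fin N × Fin d)) (Vl : Finset (Fin N))
    (ψ : EuclideanSpace ℝ (Fin d) → ℝ) (y : EuclideanSpace ℝ (Fin N × Fin d)) : ℝ :=
  (1 / 2) * ((fun p => y p - r p) ⬝ᵥ
      (𝓛 ⊗ₖ (1 : Matrix (Fin d) (Fin d) ℝ)).mulVec (fun p => y p - r p))
    + ∑ i ∈ Vl, ψ (WithLp.toLp 2 (fun j => y (i, j)))


/-! The gradient of `f` at `y` is `(𝓛 ⊗ I_d)(y - r) + ∑_{i ∈ 𝓥_l} Pᵢ* ∇ψ(Pᵢ y)`, where `Pᵢ` extracts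
the block `yᵢ`. Hence, for `z = y₁ - y₂`, the monotonicity form `⟪∇f y₁ - ∇f y₂, z⟫` lies between
`zᵀ((𝓛 + m_ψ E) ⊗ I_d) z` and `zᵀ((𝓛 + L_ψ E) ⊗ I_d) z`, and it equals `zᵀ((𝓛 + c E) ⊗ I_d) z` for the
quadratic `ψ = (c/2)‖·‖²`, which lies in `S(m_ψ, L_ψ)` for `c = m_ψ` and `c = L_ψ`. Since `d ≥ 1`,
`M ⊗ I_d ⪰ 0` iff `M ⪰ 0`, so both conditions on `f` reduce to comparing these forms with `m‖z‖²`
and `L‖z‖²`. -/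

open scoped RealInnerProductSpace ComplexOrder

section Gradient

variable {E F : Type*} [NormedAddCommGroup E] [InnerProductSpace ℝ E] [CompleteSpace E]
  [NormedAddCommGroup F] [InnerProductSpace ℝ F] [CompleteSpace F] {x : E}

theorem HasGradientAt.add {f g : E → ℝ} {f' g' : E} (hf : HasGradientAt f f' x)
    (hg : HasGradientAt g g' x) : HasGradientAt (fun y => f y + g y) (f' + g') x := by
  rw [hasGradientAt_iff_hasFDerivAt, map_add]
  exact hf.hasFDerivAt.add hg.hasFDerivAt

theorem HasGradientAt.sum {ι : Type*} {s : Finset ι} {f : ι → E → ℝ} {f' : ι → E}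
    (h : ∀ i ∈ s, HasGradientAt (f i) (f' i) x) :
    HasGradientAt (fun y => ∑ i ∈ s, f i y) (∑ i ∈ s, f' i) x := by
  rw [hasGradientAt_iff_hasFDerivAt, map_sum]
  exact HasFDerivAt.fun_sum fun i hi => (h i hi).hasFDerivAt

theorem HasGradientAt.comp_continuousLinearMap {g : F → ℝ} {g' : F} (A : E →L[ℝ] F)
    (hg : HasGradientAt g g' (A x)) :
    HasGradientAt (fun y => g (A y)) (ContinuousLinearMap.adjoint A g') x := by
  rw [hasGradientAt_iff_hasFDerivAt]
  refine (hg.hasFDerivAt.comp x A.hasFDerivAt).congr_fderiv ?_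
  ext z
  simp [ContinuousLinearMap.adjoint_inner_left]

theorem LinearMap.IsSymmetric.hasGradientAt_half_inner_sub {T : E →L[ℝ] E}
    (hT : (T : E →ₗ[ℝ] E).IsSymmetric) (r x : E) :
    HasGradientAt (fun y => 1 / 2 * ⟪T (y - r), y - r⟫) (T (x - r)) x := by
  rw [hasGradientAt_iff_hasFDerivAt]
  refine (((hT.hasStrictFDerivAt_reApplyInnerSelf (x - r)).hasFDerivAt.comp x
    ((hasFDerivAt_id x).sub_const r)).const_mul (1 / 2)).congr_fderiv ?_
  ext z
  simp

theorem hasGradientAt_half_mul_norm_sq (c : ℝ) (x : E) :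
    HasGradientAt (fun y => c / 2 * ‖y‖ ^ 2) (c • x) x := by
  rw [hasGradientAt_iff_hasFDerivAt]
  refine ((hasStrictFDerivAt_norm_sq x).hasFDerivAt.const_mul (c / 2)).congr_fderiv ?_
  ext z
  simp only [_root_.smul_apply, coe_innerSL_apply, nsmul_eq_mul, Nat.cast_ofNat, smul_eq_mul,
    map_smul, InnerProductSpace.toDual_apply_apply]
  ring

theorem memS_half_mul_norm_sq {m L c : ℝ} (hm : m ≤ c) (hL : c ≤ L) :
    memS m L fun x : E => c / 2 * ‖x‖ ^ 2 := by
  refine ⟨contDiff_const.mul (contDiff_norm_sq ℝ), fun y₁ y₂ => ?_⟩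
  rw [(hasGradientAt_half_mul_norm_sq c y₁).gradient, (hasGradientAt_half_mul_norm_sq c y₂).gradient,
    ← smul_sub, real_inner_smul_left, real_inner_self_eq_norm_sq]
  exact ⟨by gcongr, by gcongr⟩

end Gradient

namespace Matrix

theorem sub_kronecker {α l m n p : Type*} [NonUnitalNonAssocRing α] (A₁ A₂ : Matrix l m α)
    (B : Matrix n p α) : (A₁ - A₂) ⊗ₖ B = A₁ ⊗ₖ B - A₂ ⊗ₖ B := by
  ext
  simp [sub_mul]

theorem IsSymm.kronecker_one {n m : Type*} [DecidableEq m] {A : Matrix n n ℝ} (hA : A.IsSymm) :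
    (A ⊗ₖ (1 : Matrix m m ℝ)).IsSymm := by
  rw [IsSymm, ← kroneckerMap_transpose, hA.eq, transpose_one]

theorem posSemidef_kronecker_one_iff {𝕜 n m : Type*} [RCLike 𝕜] [Fintype n] [Fintype m]
    [DecidableEq m] [Nonempty m] {M : Matrix n n 𝕜} :
    (M ⊗ₖ (1 : Matrix m m 𝕜)).PosSemidef ↔ M.PosSemidef := by
  refine ⟨fun h => ?_, fun h => h.kronecker PosSemidef.one⟩
  obtain ⟨j⟩ := ‹Nonempty m›
  convert h.submatrix (fun i => (i, j))
  ext i i'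
  simp

variable {n : Type*} [Fintype n] [DecidableEq n]

theorem posSemidef_sub_smul_one_iff {A : Matrix n n ℝ} (hA : A.IsSymm) (c : ℝ) :
    (A - c • 1).PosSemidef ↔ ∀ z, c * ‖z‖ ^ 2 ≤ ⟪toEuclideanCLM (𝕜 := ℝ) A z, z⟫ := by
  rw [← isPositive_toEuclideanLin_iff, LinearMap.IsPositive, isSymmetric_toEuclideanLin_iff,
    isHermitian_iff_isSymm, and_iff_right (hA.sub (isSymm_one.smul c))]
  refine forall_congr' fun z => ?_
  change 0 ≤ ⟪toEuclideanCLM (𝕜 := ℝ) (A - c • 1) z, z⟫ ↔ _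
  rw [map_sub, map_smul, map_one, _root_.sub_apply, _root_.smul_apply, one_apply_eq_self,
    inner_sub_left, real_inner_smul_left, real_inner_self_eq_norm_sq, sub_nonneg]

theorem posSemidef_smul_one_sub_iff {A : Matrix n n ℝ} (hA : A.IsSymm) (c : ℝ) :
    (c • 1 - A).PosSemidef ↔ ∀ z, ⟪toEuclideanCLM (𝕜 := ℝ) A z, z⟫ ≤ c * ‖z‖ ^ 2 := by
  rw [← isPositive_toEuclideanLin_iff, LinearMap.IsPositive, isSymmetric_toEuclideanLin_iff,
    isHermitian_iff_isSymm, and_iff_right ((isSymm_one.smul c).sub hA)]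
  refine forall_congr' fun z => ?_
  change 0 ≤ ⟪toEuclideanCLM (𝕜 := ℝ) (c • 1 - A) z, z⟫ ↔ _
  rw [map_sub, map_smul, map_one, _root_.sub_apply, _root_.smul_apply, one_apply_eq_self,
    inner_sub_left, real_inner_smul_left, real_inner_self_eq_norm_sq, sub_nonneg]

variable {κ : Type*} [Fintype κ] [DecidableEq κ] [Nonempty κ]

theorem posSemidef_sub_smul_one_iff_kronecker {A : Matrix n n ℝ} (hA : A.IsSymm) (c : ℝ) :
    (A - c • 1).PosSemidef ↔ ∀ z : EuclideanSpace ℝ (n × κ),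
      c * ‖z‖ ^ 2 ≤ ⟪toEuclideanCLM (𝕜 := ℝ) (A ⊗ₖ (1 : Matrix κ κ ℝ)) z, z⟫ := by
  rw [← posSemidef_kronecker_one_iff (m := κ), sub_kronecker, smul_kronecker, one_kronecker_one]
  exact posSemidef_sub_smul_one_iff hA.kronecker_one c

theorem posSemidef_smul_one_sub_iff_kronecker {A : Matrix n n ℝ} (hA : A.IsSymm) (c : ℝ) :
    (c • 1 - A).PosSemidef ↔ ∀ z : EuclideanSpace ℝ (n × κ),
      ⟪toEuclideanCLM (𝕜 := ℝ) (A ⊗ₖ (1 : Matrix κ κ ℝ)) z, z⟫ ≤ c * ‖z‖ ^ 2 := by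
  rw [← posSemidef_kronecker_one_iff (m := κ), sub_kronecker, smul_kronecker, one_kronecker_one]
  exact posSemidef_smul_one_sub_iff hA.kronecker_one c

end Matrix

section Blocks

variable {ι κ : Type*} [Fintype ι] [Fintype κ]

noncomputable def blockProj (i : ι) : EuclideanSpace ℝ (ι × κ) →L[ℝ] EuclideanSpace ℝ κ :=
  LinearMap.toContinuousLinearMap
    { toFun := fun y => WithLp.toLp 2 fun j => y (i, j)
      map_add' := fun _ _ => rfl
      map_smul' := fun _ _ => rfl }

@[simp]
theorem blockProj_apply (i : ι) (y : EuclideanSpace ℝ (ι × κ)) (j : κ) :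
    blockProj i y j = y (i, j) :=
  rfl

theorem inner_toEuclideanCLM_diagonal_kronecker_one [DecidableEq ι] [DecidableEq κ] (w : ι → ℝ)
    (z : EuclideanSpace ℝ (ι × κ)) :
    ⟪toEuclideanCLM (𝕜 := ℝ) (diagonal w ⊗ₖ (1 : Matrix κ κ ℝ)) z, z⟫
      = ∑ i, w i * ‖blockProj i z‖ ^ 2 := by
  rw [real_inner_comm, inner_toEuclideanCLM, ← diagonal_one, diagonal_kronecker_diagonal]
  simp only [dotProduct, mul_one, mulVec_diagonal, Fintype.sum_prod_type,
    EuclideanSpace.norm_sq_eq, blockProj_apply, Real.norm_eq_abs, sq_abs, Finset.mul_sum]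
  exact Finset.sum_congr rfl fun i _ => Finset.sum_congr rfl fun j _ => by ring

end Blocks

section Objective

variable {N d : ℕ} (𝓛 : Matrix (Fin N) (Fin N) ℝ) (r : EuclideanSpace ℝ (Fin N × Fin d))
  (Vl : Finset (Fin N))

theorem bigf_eq (ψ : EuclideanSpace ℝ (Fin d) → ℝ) :
    bigf 𝓛 r Vl ψ = fun y =>
      1 / 2 * ⟪toEuclideanCLM (𝕜 := ℝ) (𝓛 ⊗ₖ (1 : Matrix (Fin d) (Fin d) ℝ)) (y - r), y - r⟫
        + ∑ i ∈ Vl, ψ (blockProj i y) := by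
  ext y
  rw [bigf, real_inner_comm, inner_toEuclideanCLM]
  rfl

theorem contDiff_bigf {ψ : EuclideanSpace ℝ (Fin d) → ℝ} (hψ : ContDiff ℝ 1 ψ) :
    ContDiff ℝ 1 (bigf 𝓛 r Vl ψ) := by
  rw [bigf_eq]
  have hsub : ContDiff ℝ 1 fun y : EuclideanSpace ℝ (Fin N × Fin d) => y - r := by fun_prop
  exact (contDiff_const.mul ((ContinuousLinearMap.contDiff _ |>.comp hsub).inner ℝ hsub)).add
    (ContDiff.sum fun i _ => hψ.comp (blockProj (κ := Fin d) i).contDiff)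

theorem hasGradientAt_bigf (h𝓛 : 𝓛.IsSymm) {ψ : EuclideanSpace ℝ (Fin d) → ℝ}
    (hψ : Differentiable ℝ ψ) (y : EuclideanSpace ℝ (Fin N × Fin d)) :
    HasGradientAt (bigf 𝓛 r Vl ψ)
      (toEuclideanCLM (𝕜 := ℝ) (𝓛 ⊗ₖ (1 : Matrix (Fin d) (Fin d) ℝ)) (y - r)
        + ∑ i ∈ Vl, ContinuousLinearMap.adjoint (blockProj i) (gradient ψ (blockProj i y))) y := by
  have hT : (toEuclideanLin (𝓛 ⊗ₖ (1 : Matrix (Fin d) (Fin d) ℝ))).IsSymmetric :=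
    isSymmetric_toEuclideanLin_iff.mpr (isHermitian_iff_isSymm.mpr h𝓛.kronecker_one)
  rw [bigf_eq]
  exact (hT.hasGradientAt_half_inner_sub r y).add
    (HasGradientAt.sum fun i _ => (hψ _).hasGradientAt.comp_continuousLinearMap _)

theorem inner_gradient_bigf_sub (h𝓛 : 𝓛.IsSymm) {ψ : EuclideanSpace ℝ (Fin d) → ℝ}
    (hψ : Differentiable ℝ ψ) (y₁ y₂ : EuclideanSpace ℝ (Fin N × Fin d)) :
    ⟪gradient (bigf 𝓛 r Vl ψ) y₁ - gradient (bigf 𝓛 r Vl ψ) y₂, y₁ - y₂⟫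
      = ⟪toEuclideanCLM (𝕜 := ℝ) (𝓛 ⊗ₖ (1 : Matrix (Fin d) (Fin d) ℝ)) (y₁ - y₂), y₁ - y₂⟫
        + ∑ i ∈ Vl, ⟪gradient ψ (blockProj i y₁) - gradient ψ (blockProj i y₂),
            blockProj i y₁ - blockProj i y₂⟫ := by
  rw [(hasGradientAt_bigf 𝓛 r Vl h𝓛 hψ y₁).gradient, (hasGradientAt_bigf 𝓛 r Vl h𝓛 hψ y₂).gradient,
    add_sub_add_comm, ← map_sub, sub_sub_sub_cancel_right, inner_add_left,
    ← Finset.sum_sub_distrib, sum_inner]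
  simp only [← map_sub, ContinuousLinearMap.adjoint_inner_left]

theorem inner_toEuclideanCLM_add_smul_indicator_kronecker_one (c : ℝ)
    (z : EuclideanSpace ℝ (Fin N × Fin d)) :
    ⟪toEuclideanCLM (𝕜 := ℝ)
        ((𝓛 + c • diagonal fun i => if i ∈ Vl then 1 else 0) ⊗ₖ (1 : Matrix (Fin d) (Fin d) ℝ)) z,
        z⟫
      = ⟪toEuclideanCLM (𝕜 := ℝ) (𝓛 ⊗ₖ (1 : Matrix (Fin d) (Fin d) ℝ)) z, z⟫
        + c * ∑ i ∈ Vl, ‖blockProj i z‖ ^ 2 := by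
  rw [add_kronecker, smul_kronecker, map_add, map_smul, _root_.add_apply, _root_.smul_apply,
    inner_add_left, real_inner_smul_left, inner_toEuclideanCLM_diagonal_kronecker_one]
  simp only [ite_mul, one_mul, zero_mul, Finset.sum_ite_mem, Finset.univ_inter]

theorem inner_gradient_bigf_sub_mem_Icc (h𝓛 : 𝓛.IsSymm) {ψ : EuclideanSpace ℝ (Fin d) → ℝ}
    {mψ Lψ : ℝ} (hψ : memS mψ Lψ ψ) (y₁ y₂ : EuclideanSpace ℝ (Fin N × Fin d)) :
    ⟪gradient (bigf 𝓛 r Vl ψ) y₁ - gradient (bigf 𝓛 r Vl ψ) y₂, y₁ - y₂⟫ ∈ Set.Icc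
      ⟪toEuclideanCLM (𝕜 := ℝ)
        ((𝓛 + mψ • diagonal fun i => if i ∈ Vl then 1 else 0) ⊗ₖ (1 : Matrix (Fin d) (Fin d) ℝ))
          (y₁ - y₂), y₁ - y₂⟫
      ⟪toEuclideanCLM (𝕜 := ℝ)
        ((𝓛 + Lψ • diagonal fun i => if i ∈ Vl then 1 else 0) ⊗ₖ (1 : Matrix (Fin d) (Fin d) ℝ))
          (y₁ - y₂), y₁ - y₂⟫ := by
  rw [inner_gradient_bigf_sub 𝓛 r Vl h𝓛 (hψ.1.differentiable one_ne_zero),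
    inner_toEuclideanCLM_add_smul_indicator_kronecker_one,
    inner_toEuclideanCLM_add_smul_indicator_kronecker_one, Set.mem_Icc, add_le_add_iff_left,
    add_le_add_iff_left, Finset.mul_sum, Finset.mul_sum]
  simp only [map_sub]
  exact ⟨Finset.sum_le_sum fun i _ => (hψ.2 _ _).1, Finset.sum_le_sum fun i _ => (hψ.2 _ _).2⟩

theorem inner_gradient_bigf_half_mul_norm_sq_sub (h𝓛 : 𝓛.IsSymm) (c : ℝ)
    (y₁ y₂ : EuclideanSpace ℝ (Fin N × Fin d)) :
    ⟪gradient (bigf 𝓛 r Vl fun x => c / 2 * ‖x‖ ^ 2) y₁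
        - gradient (bigf 𝓛 r Vl fun x => c / 2 * ‖x‖ ^ 2) y₂, y₁ - y₂⟫
      = ⟪toEuclideanCLM (𝕜 := ℝ)
          ((𝓛 + c • diagonal fun i => if i ∈ Vl then 1 else 0) ⊗ₖ (1 : Matrix (Fin d) (Fin d) ℝ))
            (y₁ - y₂), y₁ - y₂⟫ := by
  rw [inner_gradient_bigf_sub 𝓛 r Vl h𝓛
      fun x => (hasGradientAt_half_mul_norm_sq c x).differentiableAt,
    inner_toEuclideanCLM_add_smul_indicator_kronecker_one, Finset.mul_sum]
  congr 1
  refine Finset.sum_congr rfl fun i _ => ?_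
  rw [(hasGradientAt_half_mul_norm_sq c _).gradient, (hasGradientAt_half_mul_norm_sq c _).gradient,
    ← smul_sub, real_inner_smul_left, real_inner_self_eq_norm_sq, map_sub]

end Objective

theorem stmt3_general {N d : ℕ} [NeZero d]
    (𝓛 : Matrix (Fin N) (Fin N) ℝ) (h𝓛sym : 𝓛.IsSymm)
    (Vl : Finset (Fin N)) (r : EuclideanSpace ℝ (Fin N × Fin d))
    (mψ Lψ m L : ℝ) (hmLψ : mψ ≤ Lψ)
    (E : Matrix (Fin N) (Fin N) ℝ)
    (hE : E = Matrix.diagonal fun i => if i ∈ Vl then (1 : ℝ) else 0) :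
    (∀ ψ : EuclideanSpace ℝ (Fin d) → ℝ, memS mψ Lψ ψ → memS m L (bigf 𝓛 r Vl ψ)) ↔
      ((𝓛 + mψ • E) - m • (1 : Matrix (Fin N) (Fin N) ℝ)).PosSemidef ∧
      (L • (1 : Matrix (Fin N) (Fin N) ℝ) - (𝓛 + Lψ • E)).PosSemidef := by
  subst hE
  have hsymm (c : ℝ) : (𝓛 + c • diagonal fun i => if i ∈ Vl then (1 : ℝ) else 0).IsSymm :=
    h𝓛sym.add ((isSymm_diagonal _).smul c)
  rw [posSemidef_sub_smul_one_iff_kronecker (κ := Fin d) (hsymm mψ),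
    posSemidef_smul_one_sub_iff_kronecker (κ := Fin d) (hsymm Lψ)]
  constructor
  · intro h
    refine ⟨fun z => ?_, fun z => ?_⟩
    · have hlow := ((h _ (memS_half_mul_norm_sq le_rfl hmLψ)).2 z 0).1
      rwa [inner_gradient_bigf_half_mul_norm_sq_sub 𝓛 r Vl h𝓛sym, sub_zero] at hlow
    · have hhigh := ((h _ (memS_half_mul_norm_sq hmLψ le_rfl)).2 z 0).2
      rwa [inner_gradient_bigf_half_mul_norm_sq_sub 𝓛 r Vl h𝓛sym, sub_zero] at hhigh
  · rintro ⟨hlow, hhigh⟩ ψ hψ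
    refine ⟨contDiff_bigf 𝓛 r Vl hψ.1, fun y₁ y₂ => ?_⟩
    obtain ⟨h₁, h₂⟩ := inner_gradient_bigf_sub_mem_Icc 𝓛 r Vl h𝓛sym hψ y₁ y₂
    exact ⟨(hlow _).trans h₁, h₂.trans (hhigh _)⟩

/-- `f ∈ S(m,L)` for every `ψ ∈ S(m_ψ,L_ψ)` iff
`m I ⪯ 𝓛 + m_ψ E` and `𝓛 + L_ψ E ⪯ L I`, where `E` is the indicator of `𝓥_l`. -/
theorem stmt3 {N d : ℕ} [NeZero N] [NeZero d]
    (𝓛 : Matrix (Fin N) (Fin N) ℝ) (h𝓛sym : 𝓛.IsSymm) (h𝓛psd : 𝓛.PosSemidef)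
    (Vl : Finset (Fin N)) (r : EuclideanSpace ℝ (Fin N × Fin d))
    (mψ Lψ m L : ℝ) (hmψ : 0 < mψ) (hmLψ : mψ ≤ Lψ) (hm : 0 < m) (hmL : m ≤ L)
    (E : Matrix (Fin N) (Fin N) ℝ)
    (hE : E = Matrix.diagonal fun i => if i ∈ Vl then (1 : ℝ) else 0) :
    (∀ ψ : EuclideanSpace ℝ (Fin d) → ℝ, memS mψ Lψ ψ → memS m L (bigf 𝓛 r Vl ψ)) ↔
      ((𝓛 + mψ • E) - m • (1 : Matrix (Fin N) (Fin N) ℝ)).PosSemidef ∧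
      (L • (1 : Matrix (Fin N) (Fin N) ℝ) - (𝓛 + Lψ • E)).PosSemidef :=
  stmt3_general 𝓛 h𝓛sym Vl r mψ Lψ m L hmLψ E hE
end

section
/- Let 𝓛 be the Laplacian of an undirected graph 𝓖 in which every vertex has a path to some vertex of the nonempty set 𝓥_l, and let E be the diagonal 0/1 indicator matrix of 𝓥_l. Then for any c > 0, the grounded Laplacian 𝓛 + c·E is symmetric positive definite. -/
open Matrix

/-- if every vertex has a path to the nonempty informed set `𝓥_l`, then for
any `c > 0` the grounded Laplacian `𝓛 + c·E` is symmetric positive definite. -/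
theorem stmt5 {N : ℕ} (G : SimpleGraph (Fin N)) [DecidableRel G.Adj]
    (Vl : Finset (Fin N)) (hVl : Vl.Nonempty)
    (hconn : ∀ v : Fin N, ∃ w ∈ Vl, G.Reachable v w)
    (c : ℝ) (hc : 0 < c)
    (E : Matrix (Fin N) (Fin N) ℝ)
    (hE : E = Matrix.diagonal fun i => if i ∈ Vl then (1 : ℝ) else 0) :
    (G.lapMatrix ℝ + c • E).IsSymm ∧ (G.lapMatrix ℝ + c • E).PosDef := by
  have hsym : (G.lapMatrix ℝ + c • E).IsSymm := by
    rw [Matrix.IsSymm, transpose_add, transpose_smul, hE, diagonal_transpose,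
      show (G.lapMatrix ℝ)ᵀ = G.lapMatrix ℝ from G.isSymm_lapMatrix (R := ℝ)]
  refine ⟨hsym, Matrix.PosDef.of_dotProduct_mulVec_pos ?_ fun x hx => ?_⟩
  · rw [Matrix.IsHermitian, conjTranspose_eq_transpose_of_trivial, hsym]
  · have hEterm : ∀ y : Fin N → ℝ, star y ⬝ᵥ E *ᵥ y = ∑ i ∈ Vl, y i * y i := by
      intro y
      simp [hE, dotProduct, mulVec_diagonal, Finset.sum_ite_mem, mul_comm,
        mul_assoc, mul_left_comm]
    have hLq : star x ⬝ᵥ (G.lapMatrix ℝ) *ᵥ x =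
        Matrix.toLinearMap₂' ℝ (G.lapMatrix ℝ) x x := by
      rw [Matrix.toLinearMap₂'_apply', star_trivial]
    have hL0 : 0 ≤ Matrix.toLinearMap₂' ℝ (G.lapMatrix ℝ) x x := by
      rw [← hLq]
      exact (posSemidef_iff_dotProduct_mulVec.mp (SimpleGraph.posSemidef_lapMatrix ℝ G)).2 x
    have hEnn : 0 ≤ ∑ i ∈ Vl, x i * x i :=
      Finset.sum_nonneg fun i _ => mul_self_nonneg _
    rw [add_mulVec, dotProduct_add, smul_mulVec, dotProduct_smul, hEterm, hLq]
    rcases lt_or_eq_of_le hL0 with h | h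
    · have : 0 ≤ c * ∑ i ∈ Vl, x i * x i := mul_nonneg hc.le hEnn
      simpa using add_pos_of_pos_of_nonneg h this
    · -- L term zero: x constant on reachable pairs
      have hreach := (G.lapMatrix_toLinearMap₂'_apply'_eq_zero_iff_forall_reachable x).mp h.symm
      -- show E term positive: some x i ≠ 0 implies some i ∈ Vl with x i ≠ 0
      obtain ⟨v, hv⟩ := Function.ne_iff.mp hx
      obtain ⟨w, hwVl, hwr⟩ := hconn v
      have hxw : x w ≠ 0 := by rw [← hreach v w hwr]; exact hv
      have hpos : 0 < ∑ i ∈ Vl, x i * x i :=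
        Finset.sum_pos' (fun i _ => mul_self_nonneg _)
          ⟨w, hwVl, mul_self_pos.mpr hxw⟩
      rw [← h]
      simpa using mul_pos hc hpos
end

section
/- Let ψ ∈ S(m_ψ, L_ψ) with minimizer y_opt (so ∇ψ(y_opt) = 0), let 𝓖 and 𝓥_l satisfy the connectivity assumption, and set r = 0 in the definition f(y) = ½ yᵀ(𝓛⊗I_d)y + Σ_{i∈𝓥_l} ψ(y_i). Then z ∈ ℝ^{Nd} minimizes f if and only if z = 1_N ⊗ y_opt, i.e., every block z_i equals y_opt. -/
/-!
Strong monotonicity of `∇ψ` together with `∇ψ y_opt = 0` makes `y_opt` the unique minimizer of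
`ψ`, and the Laplacian quadratic form is nonnegative, vanishing exactly when every coordinate
column of `y` is constant along paths of `𝓖`. Hence `f ≥ |𝓥_l| ψ(y_opt)`, with equality iff every
block indexed by `𝓥_l` is `y_opt` and the columns are constant along paths, which by connectivity
to `𝓥_l` means every block is `y_opt`. Since `1_N ⊗ y_opt` attains the bound, the minimizers are
exactly the points attaining it.
-/

open Matrix
open scoped Kronecker

section Gradient

variable {E : Type*} [NormedAddCommGroup E] [InnerProductSpace ℝ E] [CompleteSpace E]
  {ψ : E → ℝ} {x y₀ : E}

/-- Mean value theorem on `[y₀, x]`: `ψ x - ψ y₀ = ⟪∇ψ p, x - y₀⟫` at an interior point `p`,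
and `⟪∇ψ p, p - y₀⟫` is a positive multiple of it. -/
theorem apply_lt_apply_of_inner_gradient_pos (hψ : Differentiable ℝ ψ)
    (hpos : ∀ y ≠ y₀, 0 < inner ℝ (gradient ψ y) (y - y₀)) (hx : x ≠ y₀) : ψ y₀ < ψ x := by
  set c : ℝ → E := fun t => AffineMap.lineMap y₀ x t
  have hderiv : ∀ t, HasDerivAt (fun s => ψ (c s)) (inner ℝ (gradient ψ (c t)) (x - y₀)) t := by
    intro t
    rw [inner_gradient_left]
    exact (hψ (c t)).hasFDerivAt.comp_hasDerivAt t AffineMap.hasDerivAt_lineMap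
  obtain ⟨t, ht, hslope⟩ := exists_hasDerivAt_eq_slope (fun s => ψ (c s)) _ one_pos
    (fun t _ => (hderiv t).continuousAt.continuousWithinAt) (fun t _ => hderiv t)
  have hct : c t - y₀ = t • (x - y₀) := AffineMap.lineMap_vsub_left y₀ x t
  have hct_ne : c t ≠ y₀ := by
    rw [← sub_ne_zero, hct]
    exact smul_ne_zero ht.1.ne' (sub_ne_zero.2 hx)
  have hmul : 0 < t * inner ℝ (gradient ψ (c t)) (x - y₀) := by
    simpa only [hct, real_inner_smul_right] using hpos (c t) hct_ne
  have hslope' : inner ℝ (gradient ψ (c t)) (x - y₀) = ψ x - ψ y₀ := by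
    simpa [c] using hslope
  linarith [(mul_pos_iff_of_pos_left ht.1).1 hmul]

theorem memS.apply_lt_of_gradient_eq_zero {m L : ℝ} (hψ : memS m L ψ) (hm : 0 < m)
    (hy₀ : gradient ψ y₀ = 0) (hx : x ≠ y₀) : ψ y₀ < ψ x := by
  refine apply_lt_apply_of_inner_gradient_pos (hψ.1.differentiable one_ne_zero) (fun y hy => ?_) hx
  have hstrong := (hψ.2 y y₀).1
  rw [hy₀, sub_zero] at hstrong
  exact (mul_pos hm (pow_pos (norm_pos_iff.2 (sub_ne_zero.2 hy)) 2)).trans_le hstrong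

end Gradient

theorem dotProduct_kronecker_one_mulVec {m n R : Type*} [Fintype m] [Fintype n] [DecidableEq n]
    [CommSemiring R] (A : Matrix m m R) (y : m × n → R) :
    y ⬝ᵥ (A ⊗ₖ (1 : Matrix n n R)) *ᵥ y =
      ∑ j, (fun i => y (i, j)) ⬝ᵥ A *ᵥ (fun i => y (i, j)) := by
  simp only [dotProduct, mulVec, kroneckerMap_apply, one_apply, Fintype.sum_prod_type, mul_ite,
    mul_one, mul_zero, ite_mul, zero_mul, Finset.sum_ite_eq, Finset.mem_univ, if_true]
  rw [Finset.sum_comm]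

namespace SimpleGraph

variable {V n : Type*} [Fintype V] [DecidableEq V] [Fintype n] [DecidableEq n]
  (G : SimpleGraph V) [DecidableRel G.Adj]

theorem dotProduct_kronecker_lapMatrix_nonneg (y : V × n → ℝ) :
    0 ≤ y ⬝ᵥ (G.lapMatrix ℝ ⊗ₖ (1 : Matrix n n ℝ)) *ᵥ y := by
  rw [dotProduct_kronecker_one_mulVec]
  exact Finset.sum_nonneg fun j _ => by
    simpa using (posSemidef_lapMatrix ℝ G).dotProduct_mulVec_nonneg (fun i => y (i, j))

theorem dotProduct_kronecker_lapMatrix_eq_zero_iff (y : V × n → ℝ) :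
    y ⬝ᵥ (G.lapMatrix ℝ ⊗ₖ (1 : Matrix n n ℝ)) *ᵥ y = 0 ↔
      ∀ a b, G.Reachable a b → ∀ j, y (a, j) = y (b, j) := by
  rw [dotProduct_kronecker_one_mulVec, Finset.sum_eq_zero_iff_of_nonneg fun j _ => by
    simpa using (posSemidef_lapMatrix ℝ G).dotProduct_mulVec_nonneg (fun i => y (i, j))]
  simp only [Finset.mem_univ, true_implies, ← toLinearMap₂'_apply',
    lapMatrix_toLinearMap₂'_apply'_eq_zero_iff_forall_reachable]
  exact ⟨fun h a b hab j => h j a b hab, fun h j a b hab => h a b hab j⟩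

end SimpleGraph

section Objective

variable {N d : ℕ} (Vl : Finset (Fin N)) {ψ : EuclideanSpace ℝ (Fin d) → ℝ}
  {yopt : EuclideanSpace ℝ (Fin d)}

theorem bigf_zero (A : Matrix (Fin N) (Fin N) ℝ) (y : EuclideanSpace ℝ (Fin N × Fin d)) :
    bigf A 0 Vl ψ y = (1 / 2) * (⇑y ⬝ᵥ (A ⊗ₖ (1 : Matrix (Fin d) (Fin d) ℝ)) *ᵥ ⇑y)
      + ∑ i ∈ Vl, ψ (WithLp.toLp 2 (fun j => y (i, j))) := by
  simp [bigf]

variable (G : SimpleGraph (Fin N)) [DecidableRel G.Adj]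

theorem sum_le_bigf_lapMatrix (hmin : ∀ x, ψ yopt ≤ ψ x)
    (y : EuclideanSpace ℝ (Fin N × Fin d)) :
    ∑ _i ∈ Vl, ψ yopt ≤ bigf (G.lapMatrix ℝ) 0 Vl ψ y := by
  rw [bigf_zero]
  have hquad := G.dotProduct_kronecker_lapMatrix_nonneg (n := Fin d) y
  have hsum := Finset.sum_le_sum fun i (_ : i ∈ Vl) => hmin (WithLp.toLp 2 fun j => y (i, j))
  linarith

theorem bigf_lapMatrix_eq_sum_iff (hconn : ∀ v : Fin N, ∃ w ∈ Vl, G.Reachable v w)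
    (hlt : ∀ x ≠ yopt, ψ yopt < ψ x) (y : EuclideanSpace ℝ (Fin N × Fin d)) :
    bigf (G.lapMatrix ℝ) 0 Vl ψ y = ∑ _i ∈ Vl, ψ yopt ↔ ∀ i j, y (i, j) = yopt j := by
  have hmin : ∀ x, ψ yopt ≤ ψ x := fun x =>
    (eq_or_ne x yopt).elim (fun h => h ▸ le_rfl) fun h => (hlt x h).le
  have hquad := G.dotProduct_kronecker_lapMatrix_nonneg (n := Fin d) y
  have hsum := Finset.sum_le_sum fun i (_ : i ∈ Vl) => hmin (WithLp.toLp 2 fun j => y (i, j))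
  rw [bigf_zero]
  constructor
  · intro h
    have hquad0 := (G.dotProduct_kronecker_lapMatrix_eq_zero_iff y).1 (by linarith)
    have hblock : ∀ i ∈ Vl, WithLp.toLp 2 (fun j => y (i, j)) = yopt := by
      have := (Finset.sum_eq_sum_iff_of_le fun i (_ : i ∈ Vl) =>
        hmin (WithLp.toLp 2 fun j => y (i, j))).1 (by linarith)
      exact fun i hi => by_contra fun hne => (hlt _ hne).ne (this i hi)
    intro i j
    obtain ⟨w, hw, hiw⟩ := hconn i
    rw [hquad0 i w hiw j, ← hblock w hw]
  · intro h
    have hquad0 := (G.dotProduct_kronecker_lapMatrix_eq_zero_iff y).2 fun a b _ j => by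
      rw [h, h]
    have hblock : ∀ i, WithLp.toLp 2 (fun j => y (i, j)) = yopt := fun i => by
      ext j
      exact h i j
    simp [hquad0, hblock]

end Objective

theorem stmt6_general {N d : ℕ}
    (G : SimpleGraph (Fin N)) [DecidableRel G.Adj]
    (Vl : Finset (Fin N))
    (hconn : ∀ v : Fin N, ∃ w ∈ Vl, G.Reachable v w)
    (mψ Lψ : ℝ) (hmψ : 0 < mψ)
    (ψ : EuclideanSpace ℝ (Fin d) → ℝ) (hψ : memS mψ Lψ ψ)
    (yopt : EuclideanSpace ℝ (Fin d)) (hyopt : gradient ψ yopt = 0)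
    (z : EuclideanSpace ℝ (Fin N × Fin d)) :
    (∀ y, bigf (G.lapMatrix ℝ) 0 Vl ψ z ≤ bigf (G.lapMatrix ℝ) 0 Vl ψ y) ↔
      ∀ (i : Fin N) (j : Fin d), z (i, j) = yopt j := by
  have hlt : ∀ x ≠ yopt, ψ yopt < ψ x := fun _ hx =>
    hψ.apply_lt_of_gradient_eq_zero hmψ hyopt hx
  have hbound := sum_le_bigf_lapMatrix Vl G fun x =>
    (eq_or_ne x yopt).elim (fun h => h ▸ le_rfl) fun h => (hlt x h).le
  have hmin_iff := bigf_lapMatrix_eq_sum_iff Vl G hconn hlt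
  have hzopt := (hmin_iff (WithLp.toLp 2 fun p => yopt p.2)).2 fun _ _ => rfl
  constructor
  · intro hz
    exact (hmin_iff z).1 (le_antisymm (hzopt ▸ hz _) (hbound z))
  · intro hz y
    rw [(hmin_iff z).2 hz]
    exact hbound y

/-- with formation reference `r = 0`, `z` minimizes `f` iff every block of
`z` equals the source `y_opt`, i.e. `z = 1_N ⊗ y_opt`. -/
theorem stmt6 {N d : ℕ} [NeZero N] [NeZero d]
    (G : SimpleGraph (Fin N)) [DecidableRel G.Adj]
    (Vl : Finset (Fin N)) (hVl : Vl.Nonempty)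
    (hconn : ∀ v : Fin N, ∃ w ∈ Vl, G.Reachable v w)
    (mψ Lψ : ℝ) (hmψ : 0 < mψ) (hmLψ : mψ ≤ Lψ)
    (ψ : EuclideanSpace ℝ (Fin d) → ℝ) (hψ : memS mψ Lψ ψ)
    (yopt : EuclideanSpace ℝ (Fin d)) (hyopt : gradient ψ yopt = 0)
    (z : EuclideanSpace ℝ (Fin N × Fin d)) :
    (∀ y, bigf (G.lapMatrix ℝ) 0 Vl ψ z ≤ bigf (G.lapMatrix ℝ) 0 Vl ψ y) ↔
      ∀ (i : Fin N) (j : Fin d), z (i, j) = yopt j :=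
  stmt6_general G Vl hconn mψ Lψ hmψ ψ hψ yopt hyopt z
end

section
/- Let ψ ∈ S(m_ψ, L_ψ) with minimizer y_opt, let 𝓖, 𝓥_l satisfy the connectivity assumption, and let z minimize f(y) = ½(y−r)ᵀ(𝓛⊗I_d)(y−r) + Σ_{i∈𝓥_l} ψ(y_i). Then y_opt lies in the set {y : ⟨∇ψ(z_i), z_i − y⟩ ≥ 0 for all i ∈ 𝓥_l}. -/
open Matrix
open scoped Kronecker

theorem memS.inner_gradient_sub_nonneg_of_gradient_eq_zero {E : Type*} [NormedAddCommGroup E]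
    [InnerProductSpace ℝ E] [CompleteSpace E] {m L : ℝ} {f : E → ℝ} (hf : memS m L f)
    (hm : 0 ≤ m) {x₀ : E} (hx₀ : gradient f x₀ = 0) (x : E) :
    0 ≤ (inner ℝ (gradient f x) (x - x₀) : ℝ) := by
  have hmono := (hf.2 x x₀).1
  rw [hx₀, sub_zero] at hmono
  exact (mul_nonneg hm (sq_nonneg _)).trans hmono

theorem stmt8_general {N d : ℕ}
    (Vl : Finset (Fin N))
    (mψ Lψ : ℝ) (hmψ : 0 < mψ)
    (ψ : EuclideanSpace ℝ (Fin d) → ℝ) (hψ : memS mψ Lψ ψ)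
    (yopt : EuclideanSpace ℝ (Fin d)) (hyopt : gradient ψ yopt = 0)
    (z : EuclideanSpace ℝ (Fin N × Fin d)) :
    yopt ∈ {y : EuclideanSpace ℝ (Fin d) |
      ∀ i ∈ Vl, 0 ≤ (inner ℝ (gradient ψ (WithLp.toLp 2 (fun j => z (i, j))))
        ((show EuclideanSpace ℝ (Fin d) from WithLp.toLp 2 (fun j => z (i, j))) - y) : ℝ)} :=
  fun _ _ => hψ.inner_gradient_sub_nonneg_of_gradient_eq_zero hmψ.le hyopt _

/-- at the minimizer `z` of `f`, the source `y_opt` lies in the set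
`{y : ⟨∇ψ(z_i), z_i − y⟩ ≥ 0 for all i ∈ 𝓥_l}`. -/
theorem stmt8 {N d : ℕ} [NeZero N] [NeZero d]
    (G : SimpleGraph (Fin N)) [DecidableRel G.Adj]
    (Vl : Finset (Fin N)) (hVl : Vl.Nonempty)
    (hconn : ∀ v : Fin N, ∃ w ∈ Vl, G.Reachable v w)
    (mψ Lψ : ℝ) (hmψ : 0 < mψ) (hmLψ : mψ ≤ Lψ)
    (ψ : EuclideanSpace ℝ (Fin d) → ℝ) (hψ : memS mψ Lψ ψ)
    (yopt : EuclideanSpace ℝ (Fin d)) (hyopt : gradient ψ yopt = 0)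
    (r : EuclideanSpace ℝ (Fin N × Fin d))
    (z : EuclideanSpace ℝ (Fin N × Fin d))
    (hz : ∀ y, bigf (G.lapMatrix ℝ) r Vl ψ z ≤ bigf (G.lapMatrix ℝ) r Vl ψ y) :
    yopt ∈ {y : EuclideanSpace ℝ (Fin d) |
      ∀ i ∈ Vl, 0 ≤ (inner ℝ (gradient ψ (WithLp.toLp 2 (fun j => z (i, j))))
        ((show EuclideanSpace ℝ (Fin d) from WithLp.toLp 2 (fun j => z (i, j))) - y) : ℝ)} :=
  stmt8_general Vl mψ Lψ hmψ ψ hψ yopt hyopt z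
end

section
/- Let ψ be quadratic, ψ(y) = yᵀQy + bᵀy + c with 2Q ⪰ m_ψ·I positive definite, with minimizer y_opt. Let z minimize f(y) = ½(y−r)ᵀ(𝓛⊗I_d)(y−r) + Σ_{i∈𝓥_l} ψ(y_i), where 𝓛 is a graph Laplacian (so 𝓛·1 = 0 and 𝓛 symmetric). Then the center of mass of the informed agents equals the source: (1/|𝓥_l|) Σ_{i∈𝓥_l} z_i = y_opt. -/
/-!
Translating every agent by the same vector `v` leaves the disagreement term
`(y - r)ᵀ (𝓛 ⊗ I) (y - r)` unchanged, because the Laplacian has zero row and column sums.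
Along such translations `f` is therefore a quadratic in `v` whose linear part is
`v ⬝ Σ_{i ∈ 𝓥_l} 2Q (z_i - y_opt)`. Minimality of `z` forces this sum to vanish, and since
`2Q` is positive definite, `Σ_{i ∈ 𝓥_l} (z_i - y_opt) = 0`.
-/
open Matrix
open scoped Kronecker

theorem eq_zero_of_forall_nonneg_mul_add_sq_mul {β α : ℝ}
    (h : ∀ t : ℝ, 0 ≤ t * β + t ^ 2 * α) : β = 0 := by
  have hmin : IsLocalMin (fun t : ℝ => t * β + t ^ 2 * α) 0 :=
    IsMinOn.isLocalMin (fun t _ => by simpa using h t) Filter.univ_mem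
  have hderiv : HasDerivAt (fun t : ℝ => t * β + t ^ 2 * α) β 0 :=
    (((hasDerivAt_id' 0).mul_const β).add ((hasDerivAt_pow 2 0).mul_const α)).congr_deriv
      (by simp)
  exact hmin.hasDerivAt_eq_zero hderiv

section Kronecker

variable {R ι κ : Type*} [CommSemiring R]

theorem vec_vecMulVec_one (v : κ → R) :
    vec (vecMulVec v fun _ : ι => 1) = fun p => v p.2 := by
  ext p; simp [vecMulVec_apply]

variable [Fintype ι] [Fintype κ]

theorem kronecker_mulVec_eq_zero {M : Matrix ι ι R} (hM : M *ᵥ (fun _ => 1) = 0)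
    (A : Matrix κ κ R) (v : κ → R) : (M ⊗ₖ A) *ᵥ (fun p => v p.2) = 0 := by
  rw [← vec_vecMulVec_one, kronecker_mulVec_vec, mul_vecMulVec, vecMulVec_mul, vecMul_transpose,
    hM]
  ext; simp [vecMulVec_apply]

theorem vecMul_kronecker_eq_zero {M : Matrix ι ι R} (hM : (fun _ => 1) ᵥ* M = 0)
    (A : Matrix κ κ R) (v : κ → R) : (fun p => v p.2) ᵥ* (M ⊗ₖ A) = 0 := by
  rw [← vec_vecMulVec_one, vec_vecMul_kronecker, mul_vecMulVec, vecMulVec_mul, hM]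
  ext; simp [vecMulVec_apply]

end Kronecker

theorem dotProduct_mulVec_add_of_mulVec_eq_zero {R n : Type*} [NonUnitalCommSemiring R]
    [Fintype n]
    {M : Matrix n n R} {w : n → R} (hMw : M *ᵥ w = 0) (hwM : w ᵥ* M = 0) (x : n → R) :
    (x + w) ⬝ᵥ M *ᵥ (x + w) = x ⬝ᵥ M *ᵥ x := by
  rw [mulVec_add, hMw, add_zero, add_dotProduct, dotProduct_mulVec w, hwM, zero_dotProduct,
    add_zero]

theorem dotProduct_add_mulVec_add_of_isSymm {R n : Type*} [CommRing R] [Fintype n]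
    {Q : Matrix n n R} (hQ : Q.IsSymm) {b y₀ : n → R} (hy₀ : (2 : R) • Q *ᵥ y₀ + b = 0)
    (c : R) (y v : n → R) :
    (y + v) ⬝ᵥ Q *ᵥ (y + v) + b ⬝ᵥ (y + v) + c =
      y ⬝ᵥ Q *ᵥ y + b ⬝ᵥ y + c + v ⬝ᵥ (2 : R) • Q *ᵥ (y - y₀) + v ⬝ᵥ Q *ᵥ v := by
  have hb : b = -((2 : R) • Q *ᵥ y₀) := eq_neg_of_add_eq_zero_right hy₀
  have hsymm : y ⬝ᵥ Q *ᵥ v = v ⬝ᵥ Q *ᵥ y := by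
    rw [dotProduct_mulVec, ← mulVec_transpose, hQ.eq, dotProduct_comm]
  subst hb
  simp only [mulVec_add, mulVec_sub, dotProduct_add, add_dotProduct, dotProduct_sub,
    dotProduct_smul, neg_dotProduct, smul_dotProduct, hsymm, smul_eq_mul,
    dotProduct_comm _ (Q *ᵥ y₀)]
  ring

theorem bigf_add_shift {N d : ℕ} {𝓛 : Matrix (Fin N) (Fin N) ℝ}
    (h𝓛 : 𝓛 *ᵥ (fun _ => 1) = 0) (h𝓛' : (fun _ => 1) ᵥ* 𝓛 = 0)
    {Q : Matrix (Fin d) (Fin d) ℝ} (hQ : Q.IsSymm) {b : Fin d → ℝ} {c : ℝ}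
    {ψ : EuclideanSpace ℝ (Fin d) → ℝ}
    (hψ : ∀ y : EuclideanSpace ℝ (Fin d), ψ y = y ⬝ᵥ Q *ᵥ y + b ⬝ᵥ y + c)
    {yopt : Fin d → ℝ} (hyopt : (2 : ℝ) • Q *ᵥ yopt + b = 0)
    (r : EuclideanSpace ℝ (Fin N × Fin d)) (Vl : Finset (Fin N))
    (z : EuclideanSpace ℝ (Fin N × Fin d)) (v : Fin d → ℝ) :
    bigf 𝓛 r Vl ψ (z + WithLp.toLp 2 fun p : Fin N × Fin d => v p.2) =
      bigf 𝓛 r Vl ψ z + v ⬝ᵥ (∑ i ∈ Vl, (2 : ℝ) • Q *ᵥ (fun j => z (i, j) - yopt j))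
        + Vl.card * (v ⬝ᵥ Q *ᵥ v) := by
  have hlap : (fun p => (z + WithLp.toLp 2 fun p : Fin N × Fin d => v p.2) p - r p) =
      (fun p => z p - r p) + fun p => v p.2 := by
    ext p; simp only [PiLp.add_apply, Pi.add_apply]; ring
  have hagent : ∀ i,
      ψ (WithLp.toLp 2 fun j => (z + WithLp.toLp 2 fun p : Fin N × Fin d => v p.2) (i, j)) =
      ψ (WithLp.toLp 2 fun j => z (i, j)) + v ⬝ᵥ (2 : ℝ) • Q *ᵥ (fun j => z (i, j) - yopt j)
        + v ⬝ᵥ Q *ᵥ v := fun i => by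
    simp only [hψ, PiLp.add_apply]
    exact dotProduct_add_mulVec_add_of_isSymm hQ hyopt c (fun j => z (i, j)) v
  unfold bigf
  rw [hlap, dotProduct_mulVec_add_of_mulVec_eq_zero (kronecker_mulVec_eq_zero h𝓛 _ v)
    (vecMul_kronecker_eq_zero h𝓛' _ v), Finset.sum_congr rfl fun i _ => hagent i,
    Finset.sum_add_distrib, Finset.sum_add_distrib, dotProduct_sum, Finset.sum_const,
    nsmul_eq_mul]
  ring

theorem sum_smul_mulVec_sub_eq_zero_of_forall_bigf_le {N d : ℕ} {𝓛 : Matrix (Fin N) (Fin N) ℝ}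
    (h𝓛 : 𝓛 *ᵥ (fun _ => 1) = 0) (h𝓛' : (fun _ => 1) ᵥ* 𝓛 = 0)
    {Q : Matrix (Fin d) (Fin d) ℝ} (hQ : Q.IsSymm) {b : Fin d → ℝ} {c : ℝ}
    {ψ : EuclideanSpace ℝ (Fin d) → ℝ}
    (hψ : ∀ y : EuclideanSpace ℝ (Fin d), ψ y = y ⬝ᵥ Q *ᵥ y + b ⬝ᵥ y + c)
    {yopt : Fin d → ℝ} (hyopt : (2 : ℝ) • Q *ᵥ yopt + b = 0)
    {r : EuclideanSpace ℝ (Fin N × Fin d)} {Vl : Finset (Fin N)}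
    {z : EuclideanSpace ℝ (Fin N × Fin d)} (hz : ∀ y, bigf 𝓛 r Vl ψ z ≤ bigf 𝓛 r Vl ψ y) :
    ∑ i ∈ Vl, (2 : ℝ) • Q *ᵥ (fun j => z (i, j) - yopt j) = 0 := by
  set g := ∑ i ∈ Vl, (2 : ℝ) • Q *ᵥ (fun j => z (i, j) - yopt j)
  suffices g ⬝ᵥ g = 0 from dotProduct_self_eq_zero.mp this
  refine eq_zero_of_forall_nonneg_mul_add_sq_mul (α := Vl.card * (g ⬝ᵥ Q *ᵥ g)) fun t => ?_
  have := hz (z + WithLp.toLp 2 fun p : Fin N × Fin d => (t • g) p.2)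
  rw [bigf_add_shift h𝓛 h𝓛' hQ hψ hyopt] at this
  simp only [mulVec_smul, dotProduct_smul, smul_dotProduct, smul_eq_mul] at this
  linarith

theorem Matrix.PosDef.of_posSemidef_sub_smul_one {n : Type*} [Fintype n] [DecidableEq n]
    {A : Matrix n n ℝ} {m : ℝ} (hm : 0 < m) (h : (A - m • 1).PosSemidef) : A.PosDef := by
  simpa using PosDef.posSemidef_add h (PosDef.one.smul hm)

theorem stmt9_general {N d : ℕ}
    (G : SimpleGraph (Fin N)) [DecidableRel G.Adj]
    (Vl : Finset (Fin N)) (hVl : Vl.Nonempty)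
    (Q : Matrix (Fin d) (Fin d) ℝ) (hQ : Q.IsSymm) (b : Fin d → ℝ) (c mψ : ℝ)
    (hmψ : 0 < mψ)
    (hQpd : ((2 : ℝ) • Q - mψ • (1 : Matrix (Fin d) (Fin d) ℝ)).PosSemidef)
    (ψ : EuclideanSpace ℝ (Fin d) → ℝ)
    (hψ : ∀ y : EuclideanSpace ℝ (Fin d), ψ y = y ⬝ᵥ Q.mulVec y + b ⬝ᵥ y + c)
    (yopt : EuclideanSpace ℝ (Fin d))
    (hyopt : (2 : ℝ) • Q.mulVec yopt + b = 0)
    (r : EuclideanSpace ℝ (Fin N × Fin d))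
    (z : EuclideanSpace ℝ (Fin N × Fin d))
    (hz : ∀ y, bigf (G.lapMatrix ℝ) r Vl ψ z ≤ bigf (G.lapMatrix ℝ) r Vl ψ y) :
    ∀ j : Fin d, ((Vl.card : ℝ))⁻¹ * ∑ i ∈ Vl, z (i, j) = yopt j := by
  have hrows : (fun _ => 1) ᵥ* G.lapMatrix ℝ = 0 := by
    rw [← mulVec_transpose, (G.isSymm_lapMatrix (R := ℝ)).eq, G.lapMatrix_mulVec_const_eq_zero]
  have hgrad := sum_smul_mulVec_sub_eq_zero_of_forall_bigf_le G.lapMatrix_mulVec_const_eq_zero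
    hrows hQ hψ hyopt hz
  simp only [← smul_mulVec, ← mulVec_sum] at hgrad
  have hsum : ∑ i ∈ Vl, (fun j => z (i, j) - yopt j) = 0 :=
    mulVec_injective_of_isUnit (PosDef.of_posSemidef_sub_smul_one hmψ hQpd).isUnit
      (hgrad.trans (mulVec_zero _).symm)
  intro j
  have hj := congrFun hsum j
  simp only [Finset.sum_apply, Finset.sum_sub_distrib, Finset.sum_const, nsmul_eq_mul,
    Pi.zero_apply, sub_eq_zero] at hj
  rw [hj, inv_mul_cancel_left₀ (Nat.cast_ne_zero.mpr (Finset.card_pos.mpr hVl).ne')]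

/-- for quadratic `ψ(y) = yᵀQy + bᵀy + c` with `2Q ⪰ m_ψ I ≻ 0`, the
center of mass of the informed agents at the minimizer `z` of `f` equals the source:
`(1/|𝓥_l|) Σ_{i∈𝓥_l} z_i = y_opt`. -/
theorem stmt9 {N d : ℕ} [NeZero N] [NeZero d]
    (G : SimpleGraph (Fin N)) [DecidableRel G.Adj]
    (Vl : Finset (Fin N)) (hVl : Vl.Nonempty)
    (hconn : ∀ v : Fin N, ∃ w ∈ Vl, G.Reachable v w)
    (Q : Matrix (Fin d) (Fin d) ℝ) (hQ : Q.IsSymm) (b : Fin d → ℝ) (c mψ : ℝ)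
    (hmψ : 0 < mψ)
    (hQpd : ((2 : ℝ) • Q - mψ • (1 : Matrix (Fin d) (Fin d) ℝ)).PosSemidef)
    (ψ : EuclideanSpace ℝ (Fin d) → ℝ)
    (hψ : ∀ y : EuclideanSpace ℝ (Fin d), ψ y = y ⬝ᵥ Q.mulVec y + b ⬝ᵥ y + c)
    (yopt : EuclideanSpace ℝ (Fin d))
    (hyopt : (2 : ℝ) • Q.mulVec yopt + b = 0)
    (r : EuclideanSpace ℝ (Fin N × Fin d))
    (z : EuclideanSpace ℝ (Fin N × Fin d))
    (hz : ∀ y, bigf (G.lapMatrix ℝ) r Vl ψ z ≤ bigf (G.lapMatrix ℝ) r Vl ψ y) :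
    ∀ j : Fin d, ((Vl.card : ℝ))⁻¹ * ∑ i ∈ Vl, z (i, j) = yopt j :=
  stmt9_general G Vl hVl Q hQ b c mψ hmψ hQpd ψ hψ yopt hyopt r z hz
end

section
/- Let ψ(y) = ψ_r(‖y − y_opt‖) be radially symmetric around y_opt, differentiable, and in S(m_ψ, L_ψ). Let z minimize f(y) = ½(y−r)ᵀ(𝓛⊗I_d)(y−r) + Σ_{i∈𝓥_l} ψ(y_i) with 𝓛 a graph Laplacian and connectivity assumption in force. Then y_opt lies in the convex hull of the points {z_i : i ∈ 𝓥_l}. -/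
open Matrix
open scoped Kronecker

/-!
The gradient of a differentiable radial function `ψ y = ψr ‖y - yopt‖` is orthogonal to every
direction orthogonal to `y - yopt` (along such a line `ψ` is even), so `∇ψ y = a • (y - yopt)`;
strong convexity forces `a ≥ mψ > 0`. Since every row of the graph Laplacian sums to zero, the
quadratic part of `f` is invariant under translating all agents by a common vector, so at the
minimiser the leaders' gradients sum to zero: `∑ aᵢ • (zᵢ - yopt) = 0` with positive weights,
i.e. `yopt` is the weighted mean of the `zᵢ`.
-/

open scoped RealInnerProductSpace

namespace Matrix

variable {R n m : Type*}

theorem IsSymm.kronecker [Mul R] {A : Matrix n n R} {B : Matrix m m R} (hA : A.IsSymm)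
    (hB : B.IsSymm) : (A ⊗ₖ B).IsSymm := by
  rw [IsSymm, ← kroneckerMap_transpose, hA.eq, hB.eq]

variable [Fintype n]

theorem kronecker_one_mulVec_comp_snd_eq_zero [Fintype m] [DecidableEq m] [NonAssocSemiring R]
    {A : Matrix n n R} (hA : A *ᵥ (fun _ => 1) = 0) (w : m → R) :
    (A ⊗ₖ (1 : Matrix m m R)) *ᵥ (fun p => w p.2) = 0 := by
  ext ⟨i, k⟩
  have hi : ∑ l, A i l = 0 := by simpa [mulVec, dotProduct] using congrFun hA i
  simp [mulVec, dotProduct, Fintype.sum_prod_type, one_apply, ← Finset.sum_mul, hi]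

theorem dotProduct_mulVec_add_of_mulVec_eq_zero [CommSemiring R] {M : Matrix n n R}
    (hM : M.IsSymm) {u : n → R} (hu : M *ᵥ u = 0) (x : n → R) :
    (x + u) ⬝ᵥ M *ᵥ (x + u) = x ⬝ᵥ M *ᵥ x := by
  rw [mulVec_add, hu, add_zero, add_dotProduct, dotProduct_mulVec u, ← mulVec_transpose, hM.eq,
    hu, zero_dotProduct, add_zero]

end Matrix

theorem HasDerivAt.eq_zero_of_even {F : Type*} [NormedAddCommGroup F] [NormedSpace ℝ F]
    {f : ℝ → F} {f' : F} (heven : Function.Even f) (hf : HasDerivAt f f' 0) : f' = 0 := by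
  have hneg : HasDerivAt (f ∘ Neg.neg) (-f') 0 := by
    simpa using hf.scomp_of_eq (0 : ℝ) (hasDerivAt_neg' 0) neg_zero.symm
  rw [show f ∘ Neg.neg = f from funext heven] at hneg
  have htwo : (2 : ℝ) • f' = 0 := by
    rw [two_smul]
    nth_rewrite 2 [hf.unique hneg]
    exact add_neg_cancel f'
  exact (smul_eq_zero.mp htwo).resolve_left two_ne_zero

theorem mem_convexHull_of_sum_smul_sub_eq_zero {V ι : Type*} [AddCommGroup V] [Module ℝ V]
    {s : Finset ι} (hs : s.Nonempty) {a : ι → ℝ} (ha : ∀ i ∈ s, 0 < a i) {x : ι → V} {c : V}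
    (hsum : ∑ i ∈ s, a i • (x i - c) = 0) : c ∈ convexHull ℝ (x '' s) := by
  have hpos : 0 < ∑ i ∈ s, a i := Finset.sum_pos ha hs
  have hcenter : s.centerMass a x = c := by
    have hmoment : ∑ i ∈ s, a i • x i = (∑ i ∈ s, a i) • c := by
      rwa [Finset.sum_smul, ← sub_eq_zero, ← Finset.sum_sub_distrib, ← Finset.sum_congr rfl
        fun i _ => smul_sub (a i) (x i) c]
    rw [Finset.centerMass, hmoment, inv_smul_smul₀ hpos.ne']
  exact hcenter ▸ s.centerMass_mem_convexHull (fun i hi => (ha i hi).le) hpos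
    fun i hi => Set.mem_image_of_mem x hi

section Gradient

variable {E : Type*} [NormedAddCommGroup E] [InnerProductSpace ℝ E] [CompleteSpace E]
  {f : E → ℝ}

theorem HasGradientAt.hasDerivAt_add_smul {a g : E} (hf : HasGradientAt f g a) (b : E) :
    HasDerivAt (fun t : ℝ => f (a + t • b)) ⟪g, b⟫ 0 := by
  have hline : HasDerivAt (fun t : ℝ => a + t • b) b 0 := by
    simpa using ((hasDerivAt_id (0 : ℝ)).smul_const b).const_add a
  simpa [Function.comp_def] using hf.hasFDerivAt.comp_hasDerivAt_of_eq 0 hline (by simp)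

theorem sum_gradient_eq_zero_of_forall_sum_le_sum_add {ι : Type*} {s : Finset ι} {x : ι → E}
    (hf : ∀ i ∈ s, DifferentiableAt ℝ f (x i))
    (hmin : ∀ w, ∑ i ∈ s, f (x i) ≤ ∑ i ∈ s, f (x i + w)) :
    ∑ i ∈ s, gradient f (x i) = 0 := by
  have hinner (w : E) : ⟪∑ i ∈ s, gradient f (x i), w⟫ = 0 := by
    have hloc : IsLocalMin (fun t : ℝ => ∑ i ∈ s, f (x i + t • w)) 0 :=
      Filter.Eventually.of_forall fun t => by simpa using hmin (t • w)
    rw [sum_inner]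
    exact hloc.hasDerivAt_eq_zero
      (HasDerivAt.fun_sum fun i hi => (hf i hi).hasGradientAt.hasDerivAt_add_smul w)
  exact inner_self_eq_zero.mp (hinner _)

variable {φ : ℝ → ℝ} {c : E}

theorem inner_gradient_eq_zero_of_radial (hrad : ∀ y, f y = φ ‖y - c‖) {y w : E}
    (hf : DifferentiableAt ℝ f y) (hw : ⟪y - c, w⟫ = 0) : ⟪gradient f y, w⟫ = 0 := by
  refine HasDerivAt.eq_zero_of_even (fun t => ?_) (hf.hasGradientAt.hasDerivAt_add_smul w)
  have horth (s : ℝ) : ⟪y - c, s • w⟫ = 0 := by rw [real_inner_smul_right, hw, mul_zero]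
  simp only [hrad, add_sub_right_comm y, norm_add_eq_sqrt_iff_real_inner_eq_zero.mpr (horth _),
    norm_smul, norm_neg]

theorem exists_gradient_eq_smul_of_radial (hrad : ∀ y, f y = φ ‖y - c‖) {y : E}
    (hf : DifferentiableAt ℝ f y) : ∃ a : ℝ, gradient f y = a • (y - c) := by
  have hmem : gradient f y ∈ (ℝ ∙ (y - c))ᗮᗮ := fun w hw => by
    rw [real_inner_comm]
    exact inner_gradient_eq_zero_of_radial hrad hf
      (Submodule.mem_orthogonal_singleton_iff_inner_right.mp hw)
  rw [Submodule.orthogonal_orthogonal] at hmem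
  obtain ⟨a, ha⟩ := Submodule.mem_span_singleton.mp hmem
  exact ⟨a, ha.symm⟩

theorem memS.exists_ge_gradient_eq_smul_of_radial {m L : ℝ} (hf : memS m L f)
    (hrad : ∀ y, f y = φ ‖y - c‖) (y : E) : ∃ a, m ≤ a ∧ gradient f y = a • (y - c) := by
  have hdiff : Differentiable ℝ f := hf.1.differentiable one_ne_zero
  obtain ⟨a, ha⟩ := exists_gradient_eq_smul_of_radial hrad (hdiff y)
  by_cases hyc : y = c
  · exact ⟨m, le_rfl, by rw [ha, hyc, sub_self, smul_zero, smul_zero]⟩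
  obtain ⟨b, hb⟩ := exists_gradient_eq_smul_of_radial hrad (hdiff c)
  have hmono := (hf.2 y c).1
  rw [ha, hb, sub_self, smul_zero, sub_zero, real_inner_smul_left, real_inner_self_eq_norm_sq]
    at hmono
  exact ⟨a, le_of_mul_le_mul_right hmono (by positivity [sub_ne_zero.mpr hyc]), ha⟩

end Gradient

theorem bigf_add_comp_snd {N d : ℕ} {𝓛 : Matrix (Fin N) (Fin N) ℝ} (h𝓛 : 𝓛.IsSymm)
    (h𝓛1 : 𝓛 *ᵥ (fun _ => 1) = 0) (r : EuclideanSpace ℝ (Fin N × Fin d)) (Vl : Finset (Fin N))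
    (ψ : EuclideanSpace ℝ (Fin d) → ℝ) (y : EuclideanSpace ℝ (Fin N × Fin d))
    (w : EuclideanSpace ℝ (Fin d)) :
    bigf 𝓛 r Vl ψ (y + WithLp.toLp 2 (fun p : Fin N × Fin d => w p.2)) =
      bigf 𝓛 r Vl ψ y + ∑ i ∈ Vl,
        (ψ (WithLp.toLp 2 (fun j => y (i, j)) + w) - ψ (WithLp.toLp 2 (fun j => y (i, j)))) := by
  have hshift : (fun p => (y + WithLp.toLp 2 (fun p : Fin N × Fin d => w p.2)) p - r p) =
      (fun p => y p - r p) + fun p => w p.2 := by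
    ext p
    simp only [PiLp.add_apply, Pi.add_apply]
    ring
  rw [bigf, bigf, hshift, dotProduct_mulVec_add_of_mulVec_eq_zero (h𝓛.kronecker isSymm_one)
    (kronecker_one_mulVec_comp_snd_eq_zero h𝓛1 _), Finset.sum_sub_distrib, add_add_sub_cancel]
  rfl

theorem stmt10_general {N d : ℕ}
    (G : SimpleGraph (Fin N)) [DecidableRel G.Adj]
    (Vl : Finset (Fin N)) (hVl : Vl.Nonempty)
    (mψ Lψ : ℝ) (hmψ : 0 < mψ)
    (ψ : EuclideanSpace ℝ (Fin d) → ℝ) (hψ : memS mψ Lψ ψ)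
    (yopt : EuclideanSpace ℝ (Fin d)) (ψr : ℝ → ℝ)
    (hrad : ∀ y : EuclideanSpace ℝ (Fin d), ψ y = ψr ‖y - yopt‖)
    (r : EuclideanSpace ℝ (Fin N × Fin d))
    (z : EuclideanSpace ℝ (Fin N × Fin d))
    (hz : ∀ y, bigf (G.lapMatrix ℝ) r Vl ψ z ≤ bigf (G.lapMatrix ℝ) r Vl ψ y) :
    yopt ∈ convexHull ℝ
      ((fun i => (show EuclideanSpace ℝ (Fin d) from WithLp.toLp 2 (fun j => z (i, j)))) '' (Vl : Set (Fin N))) := by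
  have hsum : ∑ i ∈ Vl, gradient ψ (WithLp.toLp 2 (fun j => z (i, j))) = 0 := by
    refine sum_gradient_eq_zero_of_forall_sum_le_sum_add
      (fun i _ => (hψ.1.differentiable one_ne_zero).differentiableAt) fun w => ?_
    have hzw := hz (z + WithLp.toLp 2 (fun p : Fin N × Fin d => w p.2))
    rwa [bigf_add_comp_snd (G.isSymm_lapMatrix (R := ℝ)) G.lapMatrix_mulVec_const_eq_zero,
      le_add_iff_nonneg_right, Finset.sum_sub_distrib, sub_nonneg] at hzw
  choose a hma hgrad using fun i =>
    hψ.exists_ge_gradient_eq_smul_of_radial hrad (WithLp.toLp 2 fun j => z (i, j))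
  refine mem_convexHull_of_sum_smul_sub_eq_zero hVl (fun i _ => hmψ.trans_le (hma i)) ?_
  simpa only [hgrad] using hsum

/-- for radially symmetric `ψ(y) = ψ_r(‖y − y_opt‖) ∈ S(m_ψ,L_ψ)`, the
source `y_opt` lies in the convex hull of the informed agents' positions at the
minimizer `z` of `f`. -/
theorem stmt10 {N d : ℕ} [NeZero N] [NeZero d]
    (G : SimpleGraph (Fin N)) [DecidableRel G.Adj]
    (Vl : Finset (Fin N)) (hVl : Vl.Nonempty)
    (hconn : ∀ v : Fin N, ∃ w ∈ Vl, G.Reachable v w)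
    (mψ Lψ : ℝ) (hmψ : 0 < mψ) (hmLψ : mψ ≤ Lψ)
    (ψ : EuclideanSpace ℝ (Fin d) → ℝ) (hψ : memS mψ Lψ ψ)
    (yopt : EuclideanSpace ℝ (Fin d)) (ψr : ℝ → ℝ)
    (hrad : ∀ y : EuclideanSpace ℝ (Fin d), ψ y = ψr ‖y - yopt‖)
    (r : EuclideanSpace ℝ (Fin N × Fin d))
    (z : EuclideanSpace ℝ (Fin N × Fin d))
    (hz : ∀ y, bigf (G.lapMatrix ℝ) r Vl ψ z ≤ bigf (G.lapMatrix ℝ) r Vl ψ y) :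
    yopt ∈ convexHull ℝ
      ((fun i => (show EuclideanSpace ℝ (Fin d) from WithLp.toLp 2 (fun j => z (i, j)))) '' (Vl : Set (Fin N))) :=
  stmt10_general G Vl hVl mψ Lψ hmψ ψ hψ yopt ψr hrad r z hz
end

section
/- Let 𝓛 be the Laplacian of an undirected graph on N vertices, E the diagonal indicator of a nonempty set 𝓥_l such that every vertex has a path to 𝓥_l, and 0 < m_ψ ≤ L_ψ. Then the smallest eigenvalue of 𝓛 + m_ψE is positive and can be taken as m, and the largest eigenvalue of 𝓛 + L_ψE can be taken as L, so that m·I ⪯ 𝓛 + m_ψE and 𝓛 + L_ψE ⪯ L·I with 0 < m ≤ L. -/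
open Matrix

section Aux
variable {n : Type*} [Fintype n] [DecidableEq n] [Nonempty n]

lemma aux_sub_inf {A : Matrix n n ℝ} (hA : A.IsHermitian) :
    (A - (Finset.univ.inf' Finset.univ_nonempty hA.eigenvalues) • (1 : Matrix n n ℝ)).PosSemidef := by
  set m := Finset.univ.inf' Finset.univ_nonempty hA.eigenvalues with hm
  have hU := (Matrix.mem_unitaryGroup_iff).mp (hA.eigenvectorUnitary).2
  have : A - m • (1 : Matrix n n ℝ) =
      (hA.eigenvectorUnitary : Matrix n n ℝ) * diagonal (fun i => hA.eigenvalues i - m)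
        * star (hA.eigenvectorUnitary : Matrix n n ℝ) := by
    conv_lhs => rw [hA.spectral_theorem, Unitary.conjStarAlgAut_apply]
    have h1 : (m • (1 : Matrix n n ℝ)) =
        (hA.eigenvectorUnitary : Matrix n n ℝ) * (m • (1 : Matrix n n ℝ))
          * star (hA.eigenvectorUnitary : Matrix n n ℝ) := by
      rw [Matrix.mul_smul, mul_one, Matrix.smul_mul, hU]
    rw [h1, ← Matrix.sub_mul, ← Matrix.mul_sub]
    congr 1
    congr 1
    rw [Matrix.smul_one_eq_diagonal, diagonal_sub]
    rfl
  rw [this]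
  refine (Matrix.posSemidef_diagonal_iff.mpr ?_).mul_mul_conjTranspose_same _
  intro i
  simp only [sub_nonneg]
  exact Finset.inf'_le _ (Finset.mem_univ i)

lemma aux_sup_sub {A : Matrix n n ℝ} (hA : A.IsHermitian) :
    ((Finset.univ.sup' Finset.univ_nonempty hA.eigenvalues) • (1 : Matrix n n ℝ) - A).PosSemidef := by
  set L := Finset.univ.sup' Finset.univ_nonempty hA.eigenvalues with hL
  have hU := (Matrix.mem_unitaryGroup_iff).mp (hA.eigenvectorUnitary).2
  have : L • (1 : Matrix n n ℝ) - A =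
      (hA.eigenvectorUnitary : Matrix n n ℝ) * diagonal (fun i => L - hA.eigenvalues i)
        * star (hA.eigenvectorUnitary : Matrix n n ℝ) := by
    conv_lhs => rw [hA.spectral_theorem, Unitary.conjStarAlgAut_apply]
    have h1 : (L • (1 : Matrix n n ℝ)) =
        (hA.eigenvectorUnitary : Matrix n n ℝ) * (L • (1 : Matrix n n ℝ))
          * star (hA.eigenvectorUnitary : Matrix n n ℝ) := by
      rw [Matrix.mul_smul, mul_one, Matrix.smul_mul, hU]
    rw [h1, ← Matrix.sub_mul, ← Matrix.mul_sub]
    congr 1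
    congr 1
    rw [Matrix.smul_one_eq_diagonal, diagonal_sub]
    rfl
  rw [this]
  refine (Matrix.posSemidef_diagonal_iff.mpr ?_).mul_mul_conjTranspose_same _
  intro i
  simp only [sub_nonneg]
  exact Finset.le_sup' _ (Finset.mem_univ i)

lemma aux_single_quad (M : Matrix n n ℝ) (v : n) :
    (Pi.single v 1 : n → ℝ) ⬝ᵥ (M *ᵥ (Pi.single v 1 : n → ℝ)) = M v v := by
  simp [dotProduct, mulVec, Pi.single_apply, mul_ite, Finset.sum_ite_eq, Finset.sum_ite_eq']

end Aux

/-- under the connectivity assumption, `m := λ_min(𝓛 + m_ψE) > 0` and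
`L := λ_max(𝓛 + L_ψE)` satisfy `0 < m ≤ L`, `m·I ⪯ 𝓛 + m_ψE` and `𝓛 + L_ψE ⪯ L·I`. -/
theorem stmt18 {N : ℕ} [NeZero N] (G : SimpleGraph (Fin N)) [DecidableRel G.Adj]
    (Vl : Finset (Fin N)) (hVl : Vl.Nonempty)
    (hconn : ∀ v : Fin N, ∃ w ∈ Vl, G.Reachable v w)
    (mψ Lψ : ℝ) (hmψ : 0 < mψ) (hmLψ : mψ ≤ Lψ)
    (E : Matrix (Fin N) (Fin N) ℝ)
    (hE : E = Matrix.diagonal fun i => if i ∈ Vl then (1 : ℝ) else 0) :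
    ∀ (hs : (G.lapMatrix ℝ + mψ • E).IsHermitian)
      (hb : (G.lapMatrix ℝ + Lψ • E).IsHermitian),
      ∀ m L : ℝ,
        m = Finset.univ.inf' Finset.univ_nonempty hs.eigenvalues →
        L = Finset.univ.sup' Finset.univ_nonempty hb.eigenvalues →
        0 < m ∧ m ≤ L ∧
          ((G.lapMatrix ℝ + mψ • E) - m • (1 : Matrix (Fin N) (Fin N) ℝ)).PosSemidef ∧
          (L • (1 : Matrix (Fin N) (Fin N) ℝ) - (G.lapMatrix ℝ + Lψ • E)).PosSemidef := by
  intro hs hb m L hm hL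
  have hNpos : 0 < N := Nat.pos_of_ne_zero (NeZero.ne N)
  -- E quadratic form
  have hEquad : ∀ x : Fin N → ℝ, x ⬝ᵥ (E *ᵥ x) = ∑ i ∈ Vl, x i ^ 2 := by
    intro x
    subst hE
    simp only [dotProduct, mulVec_diagonal, ite_mul, one_mul, zero_mul, mul_ite, mul_zero]
    rw [Finset.sum_ite_mem, Finset.univ_inter]
    exact Finset.sum_congr rfl fun i _ => (sq (x i)).symm ▸ (sq (x i)) ▸ rfl
  have hEquad' : ∀ x : Fin N → ℝ, 0 ≤ x ⬝ᵥ (E *ᵥ x) := by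
    intro x; rw [hEquad]; positivity
  -- positive definiteness of the small matrix
  have hPD : (G.lapMatrix ℝ + mψ • E).PosDef := by
    refine Matrix.PosDef.of_dotProduct_mulVec_pos hs fun x hx => ?_
    rw [star_trivial, add_mulVec, dotProduct_add]
    have hlap : 0 ≤ x ⬝ᵥ (G.lapMatrix ℝ *ᵥ x) := by
      simpa using (SimpleGraph.posSemidef_lapMatrix ℝ G).dotProduct_mulVec_nonneg x
    have hEx : 0 ≤ mψ * (x ⬝ᵥ (E *ᵥ x)) := mul_nonneg hmψ.le (hEquad' x)
    rw [smul_mulVec, dotProduct_smul, smul_eq_mul]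
    rcases lt_or_eq_of_le (add_nonneg hlap hEx) with h | h
    · exact h
    · exfalso
      have h1 : x ⬝ᵥ (G.lapMatrix ℝ *ᵥ x) = 0 := by linarith
      have h2 : mψ * (x ⬝ᵥ (E *ᵥ x)) = 0 := by linarith
      have h2' : x ⬝ᵥ (E *ᵥ x) = 0 := by
        rcases mul_eq_zero.mp h2 with h | h
        · exact absurd h hmψ.ne'
        · exact h
      have hxVl : ∀ i ∈ Vl, x i = 0 := by
        intro i hi
        have := hEquad x ▸ h2'
        have hz := (Finset.sum_eq_zero_iff_of_nonneg (fun j _ => sq_nonneg (x j))).mp this i hi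
        exact pow_eq_zero_iff (two_ne_zero) |>.mp hz
      have hconst : ∀ i j : Fin N, G.Reachable i j → x i = x j := by
        rw [← SimpleGraph.lapMatrix_toLinearMap₂'_apply'_eq_zero_iff_forall_reachable]
        rw [Matrix.toLinearMap₂'_apply']
        exact h1
      apply hx
      funext v
      obtain ⟨w, hw, hr⟩ := hconn v
      simp only [Pi.zero_apply]
      rw [hconst v w hr]
      exact hxVl w hw
  -- m > 0
  have hmpos : 0 < m := by
    rw [hm, Finset.lt_inf'_iff]
    intro i _
    exact hPD.eigenvalues_pos i
  -- the PSD statements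
  have hPSDs := hm ▸ aux_sub_inf hs
  have hPSDb := hL ▸ aux_sup_sub hb
  refine ⟨hmpos, ?_, hPSDs, hPSDb⟩
  -- m ≤ L via the test vector e₀
  set v0 : Fin N := ⟨0, hNpos⟩
  set e0 : Fin N → ℝ := Pi.single v0 1 with he0
  have h1 : m ≤ (G.lapMatrix ℝ + mψ • E) v0 v0 := by
    have := hPSDs.dotProduct_mulVec_nonneg e0
    rw [star_trivial, sub_mulVec, dotProduct_sub, aux_single_quad, smul_mulVec,
      dotProduct_smul, aux_single_quad] at this
    simpa using this
  have h3 : (G.lapMatrix ℝ + Lψ • E) v0 v0 ≤ L := by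
    have := hPSDb.dotProduct_mulVec_nonneg e0
    rw [star_trivial, sub_mulVec, dotProduct_sub, aux_single_quad, aux_single_quad] at this
    simpa [Matrix.smul_apply, Matrix.one_apply] using this
  have h2 : (G.lapMatrix ℝ + mψ • E) v0 v0 ≤ (G.lapMatrix ℝ + Lψ • E) v0 v0 := by
    simp only [Matrix.add_apply, Matrix.smul_apply, smul_eq_mul]
    have hEnn : 0 ≤ E v0 v0 := by subst hE; simp [Matrix.diagonal_apply]; positivity
    nlinarith
  linarith
end
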